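/- arXiv:2307.14868 — 2 statements merged into one kernel-verified Lean document; each statement's English description precedes it below -/
import Mathlib

section
/- Let L_G ∈ ℝ^{N×N} be the Laplacian matrix of a weighted directed graph G that contains a directed spanning tree and is not strongly connected. Then there exists a permutation matrix P_G with P_G^⊤ P_G = I such that P_G^⊤ L_G P_G = [[Q, 0], [−R, S]] in 2×2 block form, where: Q ∈ ℝ^{n'×n'} with 0 < n' < N is the Laplacian matrix of a strongly connected weighted directed graph, namely the subgraph of G induced by a node set C that contains all root nodes of G and receives no edges from nodes outside C; R ∈ ℝ^{(N−n')×n'} has nonnegative entries; and S ∈ ℝ^{(N−n')×(N−n')} satisfies S = L' + D', where L' is the Laplacian matrix of the subgraph of G induced by the complement of C and D' is a diagonal matrix with nonnegative entries satisfying D' 𝟏_{N−n'} = R 𝟏_{n'}. -/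
/-!
The set `C` of root nodes does the job. An edge `j → i` into a root `i` makes `j` a root, so no
edge enters `C` from outside; and every node on a path between two roots reaches a root, hence is
a root, so `C` is strongly connected. It is nonempty because `G` has a spanning tree and proper
because `G` is not strongly connected. Relabelling the nodes so that `C` comes first turns the
Laplacian into the Laplacian of the relabelled weights, and the block structure is read off entry
by entry: the diagonal entry of a node splits into its weights from inside and from outside `C`.
-/

open Finset

/-- In the weighted directed graph with weights `a` (an edge from node `j` to
node `i` whenever `a i j > 0`), node `j` is reachable from node `i`. -/
def Reachable {N : ℕ} (a : Fin N → Fin N → ℝ) : Fin N → Fin N → Prop :=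
  Relation.ReflTransGen (fun u v => 0 < a v u)

/-- The Laplacian matrix of the weighted directed graph with weights `a`:
`[L]ᵢⱼ = −aᵢⱼ` for `i ≠ j` and `[L]ᵢᵢ = ∑_{ℓ≠i} aᵢℓ`. -/
def lap {N : ℕ} (a : Fin N → Fin N → ℝ) : Matrix (Fin N) (Fin N) ℝ :=
  Matrix.of fun i j =>
    if i = j then ∑ ℓ ∈ Finset.univ.erase i, a i ℓ else -(a i j)

theorem Equiv.Perm.exists_val_lt_card_iff {N : ℕ} (p : Fin N → Prop) [DecidablePred p] :
    ∃ σ : Equiv.Perm (Fin N), ∀ k : Fin N,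
      (k : ℕ) < Fintype.card {x // p x} ↔ p (σ k) := by
  have hle : Fintype.card {x // p x} ≤ N := by
    simpa using Fintype.card_subtype_le p
  let e : {k : Fin N // (k : ℕ) < Fintype.card {x // p x}} ≃ {x // p x} :=
    Fintype.equivOfCardEq (Fintype.card_fin_lt_of_le hle)
  exact ⟨e.extendSubtype, fun k =>
    ⟨e.extendSubtype_mem k, not_imp_not.mp (e.extendSubtype_not_mem k)⟩⟩

theorem Relation.ReflTransGen.restrict {α : Type*} {r : α → α → Prop} {P : α → Prop}
    {u v : α} (h : Relation.ReflTransGen r u v) (hP : ∀ x, Relation.ReflTransGen r x v → P x) :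
    Relation.ReflTransGen (fun x y => P x ∧ P y ∧ r x y) u v := by
  induction h using Relation.ReflTransGen.head_induction_on with
  | refl => exact .refl
  | head hxy hyv ih =>
    exact .head ⟨hP _ (.head hxy hyv), hP _ hyv, hxy⟩ ih

section Laplacian

variable {N : ℕ} {a : Fin N → Fin N → ℝ}

def IsRoot (a : Fin N → Fin N → ℝ) (s : Fin N) : Prop :=
  ∀ j, Reachable a s j

theorem IsRoot.of_reachable {s x : Fin N} (hs : IsRoot a s) (hxs : Reachable a x s) :
    IsRoot a x :=
  fun j => hxs.trans (hs j)

theorem weight_eq_zero_of_isRoot (ha : ∀ i j, i ≠ j → 0 ≤ a i j) {i j : Fin N}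
    (hi : IsRoot a i) (hj : ¬IsRoot a j) : a i j = 0 := by
  have hij : i ≠ j := by rintro rfl; exact hj hi
  exact le_antisymm (not_lt.mp fun hpos => hj (hi.of_reachable (.single hpos))) (ha i j hij)

theorem IsRoot.reflTransGen_within {u v : Fin N} (hu : IsRoot a u) (hv : IsRoot a v) :
    Relation.ReflTransGen (fun x y => IsRoot a x ∧ IsRoot a y ∧ 0 < a y x) u v :=
  (hu v).restrict fun _ hx => hv.of_reachable hx

theorem lap_apply_of_ne {i j : Fin N} (h : i ≠ j) : lap a i j = -a i j := by
  simp [lap, h]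

theorem lap_apply_nonpos (ha : ∀ i j, i ≠ j → 0 ≤ a i j) {i j : Fin N} (h : i ≠ j) :
    lap a i j ≤ 0 := by
  rw [lap_apply_of_ne h, neg_nonpos]
  exact ha i j h

theorem lap_apply_self (i : Fin N) : lap a i i = ∑ ℓ ∈ univ.erase i, a i ℓ := by
  simp [lap]

theorem lap_comp_perm (σ : Equiv.Perm (Fin N)) (i j : Fin N) :
    lap a (σ i) (σ j) = lap (fun k l => a (σ k) (σ l)) i j := by
  by_cases h : i = j
  · subst h
    rw [lap_apply_self, lap_apply_self, sum_erase_eq_sub (mem_univ _),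
      sum_erase_eq_sub (mem_univ _), Equiv.sum_comp σ (a (σ i))]
  · rw [lap_apply_of_ne (σ.injective.ne h), lap_apply_of_ne h]

theorem lap_apply_self_eq_sum_add_sum (p : Fin N → Prop) [DecidablePred p] (k : Fin N) :
    lap a k k = ∑ l ∈ univ.filter (fun l => p l ∧ l ≠ k), a k l +
      ∑ l ∈ univ.filter (fun l => ¬p l ∧ l ≠ k), a k l := by
  rw [lap_apply_self, ← filter_ne', ← sum_filter_add_sum_filter_not _ p, filter_filter,
    filter_filter]
  simp only [and_comm]

theorem lap_apply_self_eq_sum_of_forall (p : Fin N → Prop) [DecidablePred p] (k : Fin N)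
    (h : ∀ l, ¬p l → a k l = 0) :
    lap a k k = ∑ l ∈ univ.filter (fun l => p l ∧ l ≠ k), a k l := by
  rw [lap_apply_self_eq_sum_add_sum p, add_eq_left]
  exact sum_eq_zero fun l hl => h l (mem_filter.1 hl).2.1

theorem lap_apply_self_eq_sum_add_sum_lt (n : ℕ) {k : Fin N} (hk : n ≤ k) :
    lap a k k = ∑ l ∈ univ.filter (fun l : Fin N => n ≤ (l : ℕ) ∧ l ≠ k), a k l +
      ∑ l ∈ univ.filter (fun l : Fin N => (l : ℕ) < n), a k l := by
  rw [lap_apply_self_eq_sum_add_sum fun l : Fin N => n ≤ (l : ℕ)]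
  congr 1
  refine sum_congr (filter_congr fun l _ => ?_) fun _ _ => rfl
  rw [← Fin.val_ne_iff]
  omega

end Laplacian

/-- If the graph `G` (with Laplacian `L = lap a`) contains a directed spanning
tree but is not strongly connected, then there is a permutation `σ` (i.e. a
permutation matrix `T`, with `M := Tᵀ L T` given by `M k l = L (σ k) (σ l)`)
and `0 < n' < N` such that `M = [[Q, 0], [−R, S]]` in `2 × 2` block form,
where the leading `n' × n'` block `Q` is the Laplacian of the strongly
connected subgraph induced by a set `C` containing all roots of `G` and
receiving no edges from outside, `R` has nonnegative entries, and
`S = L' + D'` with `L'` the Laplacian of the subgraph induced by the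
complement of `C` and `D'` diagonal nonnegative with `D' 𝟏 = R 𝟏`. -/
theorem laplacian_two_block_triangularization
    (N : ℕ)
    (a : Fin N → Fin N → ℝ)
    (ha : ∀ i j : Fin N, i ≠ j → 0 ≤ a i j)
    (htree : ∃ r : Fin N, ∀ j : Fin N, Reachable a r j)
    (hnsc : ¬ ∀ i j : Fin N, Reachable a i j) :
    ∃ (n' : ℕ) (σ : Equiv.Perm (Fin N)) (C : Set (Fin N)) (d : Fin N → ℝ),
      0 < n' ∧ n' < N ∧
      -- `C` contains all root nodes of `G`
      (∀ s : Fin N, (∀ j : Fin N, Reachable a s j) → s ∈ C) ∧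
      -- `C` receives no edges from nodes outside `C`
      (∀ i ∈ C, ∀ j : Fin N, j ∉ C → a i j = 0) ∧
      -- the permutation sends the first `n'` indices exactly onto `C`
      (∀ k : Fin N, (k : ℕ) < n' ↔ σ k ∈ C) ∧
      -- the subgraph induced by `C` is strongly connected
      (∀ u ∈ C, ∀ v ∈ C,
        Relation.ReflTransGen (fun x y => x ∈ C ∧ y ∈ C ∧ 0 < a y x) u v) ∧
      -- the upper-right block of `Tᵀ L T` is zero
      (∀ k l : Fin N, (k : ℕ) < n' → n' ≤ (l : ℕ) → lap a (σ k) (σ l) = 0) ∧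
      -- `Q` is the Laplacian of the subgraph induced by `C`:
      -- its diagonal entries only involve weights within `C`
      (∀ k : Fin N, (k : ℕ) < n' →
        lap a (σ k) (σ k) =
          ∑ l ∈ Finset.univ.filter (fun l : Fin N => (l : ℕ) < n' ∧ l ≠ k),
            a (σ k) (σ l)) ∧
      -- the lower-left block is `−R` with `R` entrywise nonnegative
      (∀ k l : Fin N, n' ≤ (k : ℕ) → (l : ℕ) < n' → lap a (σ k) (σ l) ≤ 0) ∧
      -- `S = L' + D'` with `D'` diagonal, nonnegative, and `D' 𝟏 = R 𝟏`
      (∀ k : Fin N, n' ≤ (k : ℕ) → 0 ≤ d k) ∧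
      (∀ k : Fin N, n' ≤ (k : ℕ) →
        d k = ∑ l ∈ Finset.univ.filter (fun l : Fin N => (l : ℕ) < n'),
          -(lap a (σ k) (σ l))) ∧
      (∀ k : Fin N, n' ≤ (k : ℕ) →
        lap a (σ k) (σ k) =
          (∑ l ∈ Finset.univ.filter (fun l : Fin N => n' ≤ (l : ℕ) ∧ l ≠ k),
            a (σ k) (σ l)) + d k) := by
  classical
  obtain ⟨r, hr⟩ := htree
  obtain ⟨i, hi⟩ := not_forall.mp hnsc
  obtain ⟨σ, hσ⟩ := Equiv.Perm.exists_val_lt_card_iff (IsRoot a)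
  set n' := Fintype.card {s // IsRoot a s}
  have hn'_pos : 0 < n' := Fintype.card_pos_iff.mpr ⟨⟨r, hr⟩⟩
  have hn'_lt : n' < N := by simpa using Fintype.card_subtype_lt (p := IsRoot a) hi
  have hclosed : ∀ i, IsRoot a i → ∀ j, ¬IsRoot a j → a i j = 0 :=
    fun _ hroot _ hnot => weight_eq_zero_of_isRoot ha hroot hnot
  have hσ_ne : ∀ k l : Fin N, n' ≤ k → l < n' → σ k ≠ σ l := fun k l hk hl h => by
    have := congrArg Fin.val (σ.injective h)
    omega
  refine ⟨n', σ, {s | IsRoot a s},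
    fun k => ∑ l ∈ univ.filter (fun l : Fin N => (l : ℕ) < n'), a (σ k) (σ l),
    hn'_pos, hn'_lt, fun _ hs => hs, hclosed, hσ, fun _ hu _ hv => hu.reflTransGen_within hv,
    ?_, ?_, ?_, ?_, ?_, ?_⟩
  · intro k l hk hl
    rw [lap_apply_of_ne (hσ_ne l k hl hk).symm,
      hclosed _ ((hσ k).1 hk) _ (mt (hσ l).2 (by omega)), neg_zero]
  · intro k hk
    rw [lap_comp_perm]
    exact lap_apply_self_eq_sum_of_forall _ _ fun l hl =>
      hclosed _ ((hσ k).1 hk) _ (mt (hσ l).2 hl)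
  · exact fun k l hk hl => lap_apply_nonpos ha (hσ_ne k l hk hl)
  · exact fun k hk => sum_nonneg fun l hl => ha _ _ (hσ_ne k l hk (mem_filter.1 hl).2)
  · intro k hk
    refine sum_congr rfl fun l hl => ?_
    rw [lap_apply_of_ne (hσ_ne k l hk (mem_filter.1 hl).2), neg_neg]
  · intro k hk
    rw [lap_comp_perm]
    exact lap_apply_self_eq_sum_add_sum_lt n' hk
end

section
/- Consider N interconnected scalar systems ẋ_i = f_i(x_i) + u_i with f_i : ℝ → ℝ continuous, each semi-passive, with coupling inputs u_i = −Σ_{j≠i} a_{ij}(x_i − x_j), a_{ij} ≥ 0. Suppose the directed graph on the N nodes with an edge from node j to node i whenever a_{ij} > 0 is strongly connected. Then every solution t ↦ x(t) = (x_1(t),…,x_N(t)) of the closed-loop system defined on [0,∞) is bounded. -/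
/-!
Semi-passivity with the input `u = -f(x)` cancelling the drift gives `x f(x) ≤ -H(x) < 0` once
`|x| ≥ ρ`, so every `f i` points inwards outside `[-B, B]` for `B` large. The diffusive
coupling `-∑ aᵢⱼ (xᵢ - xⱼ)` also points inwards at a coordinate that is extremal among all
coordinates, so the cube `[-B, B]ᴺ` is forward invariant.
-/

open Finset

/-- The scalar system `ẋ = f(x) + u` defines a semi-passive map `u ↦ x`:
there exist a `C¹`, radially unbounded, nonnegative storage function `V`,
a continuous function `H`, a positive continuous function `ψ` (on `[0,∞)`),
and a constant `ρ > 0` such that `V'(x)(f(x)+u) ≤ u·x − H(x)` for all `x, u`,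
and `H(x) ≥ ψ(|x|)` whenever `|x| ≥ ρ`. -/
def SemiPassive (f : ℝ → ℝ) : Prop :=
  ∃ (V H ψ : ℝ → ℝ) (ρ : ℝ),
    ContDiff ℝ 1 V ∧
    (∀ x, 0 ≤ V x) ∧
    Filter.Tendsto V (Filter.comap (fun x : ℝ => |x|) Filter.atTop) Filter.atTop ∧
    Continuous H ∧
    ContinuousOn ψ (Set.Ici 0) ∧
    (∀ r : ℝ, 0 ≤ r → 0 < ψ r) ∧
    0 < ρ ∧
    (∀ x u : ℝ, deriv V x * (f x + u) ≤ u * x - H x) ∧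
    (∀ x : ℝ, ρ ≤ |x| → ψ |x| ≤ H x)

open Set Filter Topology

theorem SemiPassive.exists_mul_neg {f : ℝ → ℝ} (h : SemiPassive f) :
    ∃ ρ > 0, ∀ s : ℝ, ρ ≤ |s| → s * f s < 0 := by
  obtain ⟨V, H, ψ, ρ, -, -, -, -, -, hψ, hρ, hVH, hHψ⟩ := h
  refine ⟨ρ, hρ, fun s hs => ?_⟩
  have hdiss : deriv V s * (f s + -f s) ≤ -f s * s - H s := hVH s (-f s)
  have hH : 0 < H s := (hψ |s| (abs_nonneg s)).trans_le (hHψ s hs)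
  rw [add_neg_cancel, mul_zero] at hdiss
  linarith

theorem HasDerivWithinAt.eventually_nhdsGT_lt {g : ℝ → ℝ} {g' t : ℝ}
    (hg : HasDerivWithinAt g g' (Ici t) t) (hg' : g' < 0) : ∀ᶠ s in 𝓝[>] t, g s < g t := by
  filter_upwards [hg.Ioi_of_Ici.limsup_slope_le' (lt_irrefl t) hg', self_mem_nhdsWithin]
    with s hslope hts
  rw [slope_def_field, div_lt_iff₀ (sub_pos.2 hts), zero_mul] at hslope
  linarith

theorem forall_le_of_deriv_neg_at_boundary {ι : Type*} [Finite ι] {y y' : ℝ → ι → ℝ}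
    {t₀ c : ℝ} (hy : ∀ i, ∀ t ∈ Ici t₀, HasDerivWithinAt (fun s => y s i) (y' t i) (Ici t₀) t)
    (h₀ : ∀ i, y t₀ i ≤ c)
    (hbdry : ∀ t ∈ Ici t₀, ∀ i, y t i = c → (∀ j, y t j ≤ c) → y' t i < 0) :
    ∀ t ∈ Ici t₀, ∀ i, y t i ≤ c := by
  have hcont : ContinuousOn y (Ici t₀) :=
    continuousOn_pi.2 fun i t ht => (hy i t ht).continuousWithinAt
  intro b hb
  suffices Icc t₀ b ⊆ y ⁻¹' Iic fun _ => c from this (right_mem_Icc.2 hb)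
  refine IsClosed.Icc_subset_of_forall_mem_nhdsWithin ?_ h₀ fun t ⟨hyt, ht, _⟩ => ?_
  · rw [inter_comm]
    exact (hcont.mono Icc_subset_Ici_self).preimage_isClosed_of_isClosed isClosed_Icc isClosed_Iic
  refine eventually_all.2 fun i => ?_
  rcases (hyt i).lt_or_eq with hlt | heq
  · have hcont_i : ContinuousWithinAt (fun s => y s i) (Ioi t) t :=
      (hy i t ht).continuousWithinAt.mono (Ioi_subset_Ici ht)
    exact hcont_i.eventually (eventually_le_nhds hlt)
  · have hdec := ((hy i t ht).mono (Ici_subset_Ici.2 ht)).eventually_nhdsGT_lt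
      (hbdry t ht i heq hyt)
    filter_upwards [hdec] with s hs
    exact hs.le.trans_eq heq

section Network

variable {N : ℕ} {f : Fin N → ℝ → ℝ} {a : Fin N → Fin N → ℝ} {x : ℝ → Fin N → ℝ} {c : ℝ}

theorem network_le_of_forall_neg (ha : ∀ i j, 0 ≤ a i j)
    (hx : ∀ i : Fin N, ∀ t ∈ Set.Ici (0 : ℝ),
      HasDerivWithinAt (fun s => x s i)
        (f i (x t i) - ∑ j ∈ Finset.univ.erase i, a i j * (x t i - x t j))
        (Set.Ici 0) t)
    (h0 : ∀ i, x 0 i ≤ c) (hfc : ∀ i, f i c < 0) :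
    ∀ t ∈ Set.Ici (0 : ℝ), ∀ i, x t i ≤ c := by
  refine forall_le_of_deriv_neg_at_boundary hx h0 fun t _ i hi hle => ?_
  have hcoupling : 0 ≤ ∑ j ∈ Finset.univ.erase i, a i j * (x t i - x t j) :=
    sum_nonneg fun j _ => mul_nonneg (ha i j) (by linarith [hle j])
  linarith [hi ▸ hfc i]

theorem network_ge_of_forall_pos (ha : ∀ i j, 0 ≤ a i j)
    (hx : ∀ i : Fin N, ∀ t ∈ Set.Ici (0 : ℝ),
      HasDerivWithinAt (fun s => x s i)
        (f i (x t i) - ∑ j ∈ Finset.univ.erase i, a i j * (x t i - x t j))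
        (Set.Ici 0) t)
    (h0 : ∀ i, c ≤ x 0 i) (hfc : ∀ i, 0 < f i c) :
    ∀ t ∈ Set.Ici (0 : ℝ), ∀ i, c ≤ x t i := by
  have hneg := forall_le_of_deriv_neg_at_boundary (y := fun t i => -x t i) (c := -c)
    (fun i t ht => (hx i t ht).neg) (fun i => neg_le_neg (h0 i)) fun t _ i hi hle => by
      have hcoupling : ∑ j ∈ Finset.univ.erase i, a i j * (x t i - x t j) ≤ 0 :=
        sum_nonpos fun j _ => mul_nonpos_of_nonneg_of_nonpos (ha i j) (by linarith [hle j])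
      have hxi : x t i = c := neg_inj.1 hi
      linarith [hxi ▸ hfc i]
  exact fun t ht i => neg_le_neg_iff.1 (hneg t ht i)

end Network

theorem network_bounded_of_semipassive_of_strongly_connected_general
    (N : ℕ)
    (f : Fin N → ℝ → ℝ)
    (hsp : ∀ i, SemiPassive (f i))
    (a : Fin N → Fin N → ℝ)
    (ha : ∀ i j, 0 ≤ a i j)
    (x : ℝ → Fin N → ℝ)
    (hx : ∀ i : Fin N, ∀ t ∈ Set.Ici (0 : ℝ),
      HasDerivWithinAt (fun s => x s i)
        (f i (x t i) - ∑ j ∈ Finset.univ.erase i, a i j * (x t i - x t j))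
        (Set.Ici 0) t) :
    ∃ c : ℝ, ∀ t ∈ Set.Ici (0 : ℝ), ∀ i : Fin N, |x t i| ≤ c := by
  choose ρ hρ hsign using fun i => (hsp i).exists_mul_neg
  obtain ⟨B, hB⟩ := Finite.exists_le fun i => max (ρ i) |x 0 i|
  have hxB i : |x 0 i| ≤ B := (le_max_right _ _).trans (hB i)
  have hfB i : f i B < 0 ∧ 0 < f i (-B) := by
    have hρB : ρ i ≤ B := (le_max_left _ _).trans (hB i)
    have hB_pos : 0 < B := (hρ i).trans_le hρB
    have hBabs : ρ i ≤ |B| := hρB.trans (le_abs_self B)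
    exact ⟨neg_of_mul_neg_right (hsign i B hBabs) hB_pos.le,
      pos_of_mul_neg_right (hsign i (-B) (by rwa [abs_neg])) (neg_nonpos.2 hB_pos.le)⟩
  have hupper := network_le_of_forall_neg ha hx (fun i => (le_abs_self _).trans (hxB i))
    fun i => (hfB i).1
  have hlower := network_ge_of_forall_pos ha hx (fun i => neg_le.1 ((neg_le_abs _).trans (hxB i)))
    fun i => (hfB i).2
  exact ⟨B, fun t ht i => abs_le.2 ⟨hlower t ht i, hupper t ht i⟩⟩

/-- Boundedness of solutions for a network of heterogeneous semi-passive
scalar systems `ẋᵢ = fᵢ(xᵢ) + uᵢ` with diffusive coupling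
`uᵢ = −∑_{j≠i} aᵢⱼ (xᵢ − xⱼ)`, whose interconnection graph is strongly
connected. -/
theorem network_bounded_of_semipassive_of_strongly_connected
    (N : ℕ) (hN : 0 < N)
    (f : Fin N → ℝ → ℝ)
    (hf : ∀ i, Continuous (f i))
    (hsp : ∀ i, SemiPassive (f i))
    (a : Fin N → Fin N → ℝ)
    (ha : ∀ i j, 0 ≤ a i j)
    (hsc : ∀ i j : Fin N, Reachable a i j)
    (x : ℝ → Fin N → ℝ)
    (hx : ∀ i : Fin N, ∀ t ∈ Set.Ici (0 : ℝ),
      HasDerivWithinAt (fun s => x s i)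
        (f i (x t i) - ∑ j ∈ Finset.univ.erase i, a i j * (x t i - x t j))
        (Set.Ici 0) t) :
    ∃ c : ℝ, ∀ t ∈ Set.Ici (0 : ℝ), ∀ i : Fin N, |x t i| ≤ c :=
  network_bounded_of_semipassive_of_strongly_connected_general N f hsp a ha x hx
end
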